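/- Harer–Zagier generating function: for every real number x with 0 ≤ x < 1 and every real number y ≥ 0, 1 + 2 · Σ_{g=0}^{∞} Σ_{N=2g}^{∞} e_g(N) · x^{N+1} · y^{N−2g+1} / (2N−1)!! = ((1+x)/(1−x))^y, where the double series converges, (2N−1)!! = 1·3·5⋯(2N−1) (with (−1)!! = 1), and e_g(N) = (1/4^g) · (2N)! / ((N − 2g + 1)! · N!) · Σ_{λ_1 + ⋯ + λ_L = g} 1 / ((2λ_1 + 1) ⋯ (2λ_L + 1)) with L = N − 2g + 1. -/

import Mathlib

open Finset

/-- The Harer–Zagier numbers `e_g(N)` given by the explicit decomposition formula: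
`e_g(N) = (1/4^g) · (2N)! / ((N − 2g + 1)! · N!) · Σ_{λ_1+⋯+λ_L = g} 1/((2λ_1+1)⋯(2λ_L+1))`
with `L = N − 2g + 1` (intended for `N ≥ 2g`). -/
noncomputable def eHZ (g N : ℕ) : ℚ :=
  (1 / 4 ^ g) * ((Nat.factorial (2 * N) : ℚ) /
      ((Nat.factorial (N - 2 * g + 1) : ℚ) * (Nat.factorial N : ℚ))) *
    ∑ lam ∈ Finset.Nat.antidiagonalTuple (N - 2 * g + 1) g,
      ∏ k : Fin (N - 2 * g + 1), (1 : ℚ) / (2 * lam k + 1)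

/-- The summand `2·x^(2n+1)/(2n+1)` of the `artanh` series. -/
noncomputable def uHZ (x : ℝ) (n : ℕ) : ℝ := 2 * x ^ (2 * n + 1) / (2 * (n : ℝ) + 1)

lemma uHZ_nonneg {x : ℝ} (hx : 0 ≤ x) (n : ℕ) : 0 ≤ uHZ x n := by
  unfold uHZ; positivity

lemma hasSum_uHZ {x : ℝ} (hx0 : 0 ≤ x) (hx1 : x < 1) :
    HasSum (uHZ x) (Real.log ((1 + x) / (1 - x))) := by
  have hx : |x| < 1 := by rwa [abs_of_nonneg hx0]
  have hx' : |(-x)| < 1 := by rwa [abs_neg]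
  have h1 := Real.hasSum_pow_div_log_of_abs_lt_one hx
  have h2 := Real.hasSum_pow_div_log_of_abs_lt_one hx'
  have h3 := h1.sub h2
  have hA : -Real.log (1 - x) - -Real.log (1 - -x) = Real.log ((1 + x) / (1 - x)) := by
    rw [Real.log_div (by linarith) (by linarith)]
    ring_nf
  rw [hA] at h3
  have hinj : Function.Injective (fun n : ℕ => 2 * n) := by
    intro a b h
    dsimp only at h
    omega
  have h0 : ∀ n ∉ Set.range (fun n : ℕ => 2 * n),
      x ^ (n + 1) / (n + 1) - (-x) ^ (n + 1) / (n + 1) = 0 := by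
    intro n hn
    have hodd : Odd n := by
      rcases Nat.even_or_odd n with ⟨k, hk⟩ | ho
      · exact absurd ⟨k, by dsimp only; omega⟩ hn
      · exact ho
    have : Even (n + 1) := Odd.add_one hodd
    rw [this.neg_pow, sub_self]
  have h4 := (hinj.hasSum_iff h0).mpr h3
  have heq : ((fun n : ℕ => x ^ (n + 1) / (n + 1) - (-x) ^ (n + 1) / (n + 1)) ∘
      (fun n : ℕ => 2 * n)) = uHZ x := by
    funext n
    have he : Odd (2 * n + 1) := ⟨n, by ring⟩
    simp only [Function.comp, uHZ, he.neg_pow]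
    push_cast
    ring
  rwa [heq] at h4

lemma hasSum_pi_prod {u : ℕ → ℝ} {A : ℝ} (hu0 : ∀ n, 0 ≤ u n) (hA : HasSum u A) :
    ∀ L : ℕ, HasSum (fun l : Fin L → ℕ => ∏ k, u (l k)) (A ^ L) := by
  intro L
  induction L with
  | zero =>
      have : HasSum (fun l : Fin 0 → ℕ => ∏ k, u (l k)) (∑ l : Fin 0 → ℕ, ∏ k, u (l k)) :=
        hasSum_fintype _
      simpa using this
  | succ n ih =>
      have hsummable : Summable (fun p : ℕ × (Fin n → ℕ) => u p.1 * ∏ k, u (p.2 k)) := by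
        apply Summable.mul_of_nonneg hA.summable ih.summable
        · exact fun m => hu0 m
        · exact fun l => Finset.prod_nonneg fun k _ => hu0 _
      have hmul := hA.mul ih hsummable
      have heq : ((fun l : Fin (n + 1) → ℕ => ∏ k, u (l k)) ∘
          (Fin.consEquiv fun _ => ℕ)) =
          (fun p : ℕ × (Fin n → ℕ) => u p.1 * ∏ k, u (p.2 k)) := by
        funext p
        simp [Fin.consEquiv, Fin.prod_univ_succ]
      have := ((Fin.consEquiv fun _ => ℕ).hasSum_iff (a := A * A ^ n)
        (f := fun l : Fin (n + 1) → ℕ => ∏ k, u (l k))).mp (by rw [heq]; exact hmul)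
      rwa [← pow_succ'] at this

lemma hasSum_group {u : ℕ → ℝ} {A : ℝ} (hu0 : ∀ n, 0 ≤ u n) (hA : HasSum u A) (L : ℕ) :
    HasSum (fun g : ℕ => ∑ l ∈ Finset.Nat.antidiagonalTuple L g, ∏ k, u (l k)) (A ^ L) := by
  have h := hasSum_pi_prod hu0 hA L
  set F : (Fin L → ℕ) → ℝ := fun l => ∏ k, u (l k) with hF
  let e : (Σ g : ℕ, {l : Fin L → ℕ // l ∈ Finset.Nat.antidiagonalTuple L g}) ≃ (Fin L → ℕ) :=
    (Equiv.sigmaCongrRight fun g => Equiv.subtypeEquivRight fun l =>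
      (Finset.Nat.mem_antidiagonalTuple (n := g) (k := L)).trans Iff.rfl).trans
      (Equiv.sigmaFiberEquiv fun l : Fin L → ℕ => ∑ k, l k)
  have h2 : HasSum (F ∘ e) (A ^ L) := e.hasSum_iff.mpr h
  refine HasSum.sigma (g := fun g => ∑ l ∈ Finset.Nat.antidiagonalTuple L g, F l) h2 ?_
  intro g
  exact (Finset.Nat.antidiagonalTuple L g).hasSum F

lemma fact_dfact (N : ℕ) :
    Nat.factorial (2 * N) = Nat.doubleFactorial (2 * N - 1) * (2 ^ N * Nat.factorial N) := by
  cases N with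
  | zero => rfl
  | succ n =>
      have h1 : 2 * (n + 1) = (2 * n + 1) + 1 := by ring
      have h2 : 2 * (n + 1) - 1 = 2 * n + 1 := by omega
      rw [h1, Nat.factorial_eq_mul_doubleFactorial]
      simp only [Nat.add_sub_cancel]
      rw [← h1, Nat.doubleFactorial_two_mul]
      ring

lemma tupleSum_congr {k k' n : ℕ} (h : k = k') (f : ℕ → ℝ) :
    ∑ l ∈ Finset.Nat.antidiagonalTuple k n, ∏ i, f (l i)
      = ∑ l ∈ Finset.Nat.antidiagonalTuple k' n, ∏ i, f (l i) := by subst h; rfl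

lemma keyEq {x y : ℝ} (g m : ℕ) :
    (eHZ g (2 * g + m) : ℝ) * x ^ (2 * g + m + 1) * y ^ (m + 1) /
      (Nat.doubleFactorial (2 * (2 * g + m) - 1) : ℝ)
    = (y ^ (m + 1) / (2 * (Nat.factorial (m + 1) : ℝ))) *
        ∑ l ∈ Finset.Nat.antidiagonalTuple (m + 1) g, ∏ k, uHZ x (l k) := by
  have hm : 2 * g + m - 2 * g = m := by omega
  simp only [eHZ, hm]
  push_cast
  rw [tupleSum_congr (show 2 * g + m - 2 * g + 1 = m + 1 by omega)
    (fun a : ℕ => 1 / (2 * (a : ℝ) + 1))]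
  have hD : ((Nat.factorial (2 * (2 * g + m)) : ℝ)) =
      (Nat.doubleFactorial (2 * (2 * g + m) - 1) : ℝ) *
        (2 ^ (2 * g + m) * (Nat.factorial (2 * g + m) : ℝ)) := by
    exact_mod_cast congrArg (Nat.cast : ℕ → ℝ) (fact_dfact (2 * g + m))
  rw [hD]
  simp only [Finset.mul_sum, Finset.sum_mul, Finset.sum_div]
  refine Finset.sum_congr rfl ?_
  intro l hl
  have hsum : ∑ k, l k = g := Finset.Nat.mem_antidiagonalTuple.mp hl
  have hexp : ∑ k : Fin (m + 1), (2 * l k + 1) = 2 * g + m + 1 := by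
    rw [Finset.sum_add_distrib, ← Finset.mul_sum, hsum]
    simp
    omega
  have hprod : ∏ k : Fin (m + 1), uHZ x (l k)
      = 2 ^ (m + 1) * (x ^ (2 * g + m + 1) * ∏ k : Fin (m + 1), (1 / (2 * (l k : ℝ) + 1))) := by
    calc ∏ k : Fin (m + 1), uHZ x (l k)
        = ∏ k : Fin (m + 1), ((2 : ℝ) * (x ^ (2 * l k + 1) * (1 / (2 * (l k : ℝ) + 1)))) := by
          refine Finset.prod_congr rfl fun k _ => ?_
          unfold uHZ; ring
      _ = (∏ _k : Fin (m + 1), (2 : ℝ)) *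
            ((∏ k : Fin (m + 1), x ^ (2 * l k + 1)) *
              ∏ k : Fin (m + 1), (1 / (2 * (l k : ℝ) + 1))) := by
          rw [← Finset.prod_mul_distrib, ← Finset.prod_mul_distrib]
      _ = 2 ^ (m + 1) * (x ^ (2 * g + m + 1) * ∏ k : Fin (m + 1), (1 / (2 * (l k : ℝ) + 1))) := by
          rw [Finset.prod_const, Finset.prod_pow_eq_pow_sum, hexp]
          simp
  rw [hprod]
  have hfm : (Nat.factorial (m + 1) : ℝ) ≠ 0 := by positivity
  have hfN : (Nat.factorial (2 * g + m) : ℝ) ≠ 0 := by positivity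
  have hDD : (Nat.doubleFactorial (2 * (2 * g + m) - 1) : ℝ) ≠ 0 := by
    have := Nat.doubleFactorial_pos (2 * (2 * g + m) - 1)
    positivity
  have h4 : (4 : ℝ) ^ g = 2 ^ (2 * g) := by
    rw [show (4 : ℝ) = 2 ^ 2 by norm_num, ← pow_mul]
  have h2N : (2 : ℝ) ^ (2 * g + m) = 2 ^ (2 * g) * 2 ^ m := pow_add 2 (2 * g) m
  rw [h2N, h4, pow_succ]
  field_simp
  ring

/-- **Harer–Zagier generating function:** for `0 ≤ x < 1` and `y ≥ 0`,
`1 + 2 · Σ_{g=0}^∞ Σ_{N=2g}^∞ e_g(N) · x^{N+1} · y^{N−2g+1} / (2N−1)!! = ((1+x)/(1−x))^y`,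
the double series converging. The double sum is indexed by pairs `(g, m)` with
`N = 2g + m` ranging over all `N ≥ 2g`, and `(2N−1)!!` is the double factorial
(with `(−1)!! = 1`). -/
theorem eHZ_generating_function (x y : ℝ) (hx0 : 0 ≤ x) (hx1 : x < 1) (hy : 0 ≤ y) :
    ∃ S : ℝ, HasSum
        (fun p : ℕ × ℕ =>
          (eHZ p.1 (2 * p.1 + p.2) : ℝ) * x ^ (2 * p.1 + p.2 + 1) * y ^ (p.2 + 1) /
            (Nat.doubleFactorial (2 * (2 * p.1 + p.2) - 1) : ℝ)) S ∧
      1 + 2 * S = ((1 + x) / (1 - x)) ^ y := by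
  set A := Real.log ((1 + x) / (1 - x)) with hAdef
  have hu := hasSum_uHZ hx0 hx1
  have hu0 := uHZ_nonneg hx0
  set f : ℕ × ℕ → ℝ := fun p =>
    (eHZ p.1 (2 * p.1 + p.2) : ℝ) * x ^ (2 * p.1 + p.2 + 1) * y ^ (p.2 + 1) /
      (Nat.doubleFactorial (2 * (2 * p.1 + p.2) - 1) : ℝ) with hfdef
  set c : ℕ → ℝ := fun m => y ^ (m + 1) / (2 * (Nat.factorial (m + 1) : ℝ)) with hcdef
  have hkey : ∀ g m : ℕ, f (g, m) =
      c m * ∑ l ∈ Finset.Nat.antidiagonalTuple (m + 1) g, ∏ k, uHZ x (l k) :=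
    fun g m => keyEq g m
  have hB : ∀ m, HasSum (fun g => f (g, m)) (c m * A ^ (m + 1)) := by
    intro m
    have h3 := (hasSum_group hu0 hu (m + 1)).mul_left (c m)
    have heq : (fun g => f (g, m)) =
        fun g => c m * ∑ l ∈ Finset.Nat.antidiagonalTuple (m + 1) g, ∏ k, uHZ x (l k) :=
      funext fun g => hkey g m
    rw [heq]
    exact h3
  have hexp : HasSum (fun n : ℕ => (y * A) ^ n / (Nat.factorial n : ℝ))
      (Real.exp (y * A)) := by
    rw [Real.exp_eq_exp_ℝ]
    exact NormedSpace.expSeries_div_hasSum_exp (y * A)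
  have hshift : HasSum (fun m : ℕ => (y * A) ^ (m + 1) / (Nat.factorial (m + 1) : ℝ))
      (Real.exp (y * A) - 1) := by
    refine (hasSum_nat_add_iff (f := fun n : ℕ => (y * A) ^ n / (Nat.factorial n : ℝ)) 1).mpr ?_
    convert hexp using 1
    · rfl
    simp [Nat.factorial]
  have hc' : HasSum (fun m => c m * A ^ (m + 1)) ((Real.exp (y * A) - 1) / 2) := by
    have h5 := hshift.div_const 2
    have heq : (fun m : ℕ => (y * A) ^ (m + 1) / (Nat.factorial (m + 1) : ℝ) / 2) =
        fun m => c m * A ^ (m + 1) := by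
      funext m
      rw [hcdef, mul_pow]
      ring
    rwa [heq] at h5
  set f' : ℕ × ℕ → ℝ := fun q => f (q.2, q.1) with hf'def
  have hfib : ∀ m, HasSum (fun g => f' (m, g)) (c m * A ^ (m + 1)) := fun m => hB m
  have hnn : ∀ q : ℕ × ℕ, 0 ≤ f' q := by
    intro q
    have : f' q = f (q.2, q.1) := rfl
    rw [this, hkey q.2 q.1]
    apply mul_nonneg
    · rw [hcdef]; positivity
    · exact Finset.sum_nonneg fun l _ => Finset.prod_nonneg fun k _ => hu0 _
  have hsumm : Summable f' := by
    apply (summable_prod_of_nonneg hnn).mpr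
    constructor
    · exact fun m => (hfib m).summable
    · have heq : (fun m => ∑' g, f' (m, g)) = fun m => c m * A ^ (m + 1) :=
        funext fun m => (hfib m).tsum_eq
      rw [heq]
      exact hc'.summable
  obtain ⟨T, hT⟩ := hsumm
  have hTfib : HasSum (fun m => c m * A ^ (m + 1)) T := hT.prod_fiberwise hfib
  have hTval : T = (Real.exp (y * A) - 1) / 2 := hTfib.unique hc'
  have hfinal : HasSum f T := by
    have hcomp : f ∘ (Equiv.prodComm ℕ ℕ) = f' := rfl
    exact ((Equiv.prodComm ℕ ℕ).hasSum_iff).mp (by rw [hcomp]; exact hT)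
  refine ⟨T, hfinal, ?_⟩
  rw [hTval]
  have hb : 0 < (1 + x) / (1 - x) := div_pos (by linarith) (by linarith)
  rw [Real.rpow_def_of_pos hb, ← hAdef]
  rw [mul_comm A y]
  ring
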